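/- arXiv:2603.03246 — 2 statements merged into one kernel-verified Lean document; each statement's English description precedes it below -/
import Mathlib

section
/- Define j^θ(t) := ∫₀^∞ t^{a−1} e^{θa} / Γ(a) da for t > 0. For every s > 0 with log s > θ, the Laplace transform satisfies ∫₀^∞ e^{−st} j^θ(t) dt = 1/(log s − θ). -/
open MeasureTheory Real

noncomputable def jfun (θ t : ℝ) : ℝ :=
  ∫ a in Set.Ioi (0 : ℝ), t ^ (a - 1) * Real.exp (θ * a) / Real.Gamma a

lemma inner_t_integral (s : ℝ) (hs : 0 < s) {a : ℝ} (ha : 0 < a) :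
    ∫ t in Set.Ioi (0:ℝ), t ^ (a - 1) * Real.exp (-(s * t))
      = s ^ (-a) * Real.Gamma a := by
  have h := integral_rpow_mul_exp_neg_mul_rpow (p := 1) (q := a - 1) (b := s)
    one_pos (by linarith) hs
  simpa [Real.rpow_one, neg_mul, sub_add_cancel] using h

lemma exp_neg_mul_integral {c : ℝ} (hc : 0 < c) :
    ∫ a in Set.Ioi (0:ℝ), Real.exp (-(c * a)) = 1 / c := by
  have h := integral_exp_neg_mul_rpow (p := 1) (b := c) one_pos hc
  norm_num [Real.rpow_one, neg_mul, Real.Gamma_two, Real.rpow_neg_one, one_div] at h ⊢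
  simpa [neg_mul] using h

lemma innerT_integrable (s : ℝ) (hs : 0 < s) {a : ℝ} (ha : 0 < a) :
    IntegrableOn (fun t : ℝ => t ^ (a - 1) * Real.exp (-(s * t))) (Set.Ioi 0) := by
  have h := integrableOn_rpow_mul_exp_neg_mul_rpow (p := 1) (s := a - 1) (b := s)
    (by linarith) one_pos hs
  simpa [Real.rpow_one, neg_mul] using h

theorem stmt3 (θ s : ℝ) (hs : 0 < s) (hθ : θ < Real.log s) :
    ∫ t in Set.Ioi (0 : ℝ), Real.exp (-(s * t)) * jfun θ t = 1 / (Real.log s - θ) := by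
  have hc : 0 < Real.log s - θ := sub_pos.mpr hθ
  set c := Real.log s - θ with hcdef
  set F : ℝ → ℝ → ℝ := fun a t =>
    Real.exp (-(s * t)) * (t ^ (a - 1) * Real.exp (θ * a) / Real.Gamma a) with hF
  -- pointwise value of the t-integral
  have key : ∀ a ∈ Set.Ioi (0:ℝ), ∫ t in Set.Ioi (0:ℝ), F a t = Real.exp (-(c * a)) := by
    intro a ha
    have ha' : (0:ℝ) < a := ha
    have hΓ : 0 < Real.Gamma a := Real.Gamma_pos_of_pos ha'
    have h1 : ∫ t in Set.Ioi (0:ℝ), F a t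
        = (Real.exp (θ * a) / Real.Gamma a)
          * ∫ t in Set.Ioi (0:ℝ), t ^ (a - 1) * Real.exp (-(s * t)) := by
      rw [← integral_const_mul]
      refine setIntegral_congr_fun measurableSet_Ioi fun t _ => ?_
      simp only [hF]; ring
    have h2 : Real.exp (θ * a) / Real.Gamma a * (Real.exp (Real.log s * -a) * Real.Gamma a)
        = Real.exp (θ * a) * Real.exp (Real.log s * -a) := by
      field_simp
    rw [h1, inner_t_integral s hs ha', Real.rpow_def_of_pos hs, h2, ← Real.exp_add]
    congr 1
    simp only [hcdef]; ring
  -- continuity of F on the product of Ioi 0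
  have hΓcont : ContinuousOn Real.Gamma (Set.Ioi (0:ℝ)) := fun a ha => by
    have : DifferentiableAt ℝ Real.Gamma a :=
      Real.differentiableAt_Gamma (fun m => by
        have : (0:ℝ) < a := ha
        intro h; rw [h] at this
        exact absurd this (by simp))
    exact this.continuousAt.continuousWithinAt
  have hmeas : AEStronglyMeasurable (fun p : ℝ × ℝ => F p.1 p.2)
      ((volume.restrict (Set.Ioi 0)).prod (volume.restrict (Set.Ioi 0))) := by
    rw [Measure.prod_restrict]
    refine ContinuousOn.aestronglyMeasurable ?_ (measurableSet_Ioi.prod measurableSet_Ioi)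
    have h1 : ContinuousOn (fun p : ℝ × ℝ => p.2 ^ (p.1 - 1))
        (Set.Ioi (0:ℝ) ×ˢ Set.Ioi (0:ℝ)) := by
      apply ContinuousOn.rpow continuous_snd.continuousOn
        (continuous_fst.continuousOn.sub continuousOn_const)
      intro p hp
      exact Or.inl (ne_of_gt hp.2)
    have h2 : ContinuousOn (fun p : ℝ × ℝ => Real.Gamma p.1)
        (Set.Ioi (0:ℝ) ×ˢ Set.Ioi (0:ℝ)) :=
      hΓcont.comp continuous_fst.continuousOn (fun p hp => hp.1)
    refine ((Real.continuous_exp.comp (continuous_const.mul continuous_snd).neg).continuousOn.mul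
      (((h1.mul ((Real.continuous_exp.comp (continuous_const.mul
        continuous_fst)).continuousOn)).div h2 ?_)))
    intro p hp
    exact (Real.Gamma_pos_of_pos hp.1).ne'
  -- integrability on the product
  have hInt : Integrable (fun p : ℝ × ℝ => F p.1 p.2)
      ((volume.restrict (Set.Ioi 0)).prod (volume.restrict (Set.Ioi 0))) := by
    rw [integrable_prod_iff hmeas]
    constructor
    · filter_upwards [ae_restrict_mem measurableSet_Ioi] with a ha
      have ha' : (0:ℝ) < a := ha
      have h := (innerT_integrable s hs ha').const_mul (Real.exp (θ * a) / Real.Gamma a)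
      refine h.congr ?_
      refine Filter.Eventually.of_forall fun t => ?_
      simp only [hF]; ring
    · have heq : ∀ᵐ a ∂(volume.restrict (Set.Ioi (0:ℝ))),
          (∫ t in Set.Ioi (0:ℝ), ‖F a t‖) = Real.exp (-(c * a)) := by
        filter_upwards [ae_restrict_mem measurableSet_Ioi] with a ha
        have ha' : (0:ℝ) < a := ha
        have hΓ : 0 < Real.Gamma a := Real.Gamma_pos_of_pos ha'
        rw [← key a ha]
        refine setIntegral_congr_fun measurableSet_Ioi fun t ht => ?_
        have ht' : (0:ℝ) < t := ht
        have : 0 ≤ F a t := by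
          have h0 : 0 ≤ t ^ (a - 1) := Real.rpow_nonneg ht'.le _
          have := Real.Gamma_pos_of_pos ha'
          simp only [hF]
          positivity
        rw [Real.norm_eq_abs, abs_of_nonneg this]
      refine Integrable.congr ?_ (Filter.EventuallyEq.symm heq)
      have h : IntegrableOn (fun a : ℝ => Real.exp (-(c * a))) (Set.Ioi 0) := by
        simpa [neg_mul] using exp_neg_integrableOn_Ioi 0 hc
      exact h
  -- main computation
  calc ∫ t in Set.Ioi (0:ℝ), Real.exp (-(s * t)) * jfun θ t
      = ∫ t in Set.Ioi (0:ℝ), ∫ a in Set.Ioi (0:ℝ), F a t := by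
        refine setIntegral_congr_fun measurableSet_Ioi fun t _ => ?_
        rw [jfun, ← integral_const_mul]
    _ = ∫ a in Set.Ioi (0:ℝ), ∫ t in Set.Ioi (0:ℝ), F a t :=
        (integral_integral_swap hInt).symm
    _ = ∫ a in Set.Ioi (0:ℝ), Real.exp (-(c * a)) :=
        setIntegral_congr_fun measurableSet_Ioi key
    _ = 1 / c := exp_neg_mul_integral hc
end

section
/- There exists a constant C > 0 such that for all t ∈ (0, e^{−2}], the function j⁰(t) := ∫₀^∞ t^{a−1}/Γ(a) da satisfies j⁰(t) ≤ C / (t (log t)²). -/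
open MeasureTheory Real

noncomputable def jzero (t : ℝ) : ℝ :=
  ∫ a in Set.Ioi (0 : ℝ), t ^ (a - 1) / Real.Gamma a

/-- For `s ≥ 1`, `Γ(s) ≥ e⁻¹`. -/
lemma gamma_ge_exp_neg_one {s : ℝ} (hs : 1 ≤ s) : Real.exp (-1) ≤ Real.Gamma s := by
  have hs0 : 0 < s := lt_of_lt_of_le one_pos hs
  rw [Real.Gamma_eq_integral hs0]
  have h1 : Real.exp (-1) = ∫ x in Set.Ioi (1 : ℝ), Real.exp (-x) :=
    (integral_exp_neg_Ioi 1).symm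
  rw [h1]
  have hint : IntegrableOn (fun x : ℝ => Real.exp (-x) * x ^ (s - 1)) (Set.Ioi 1) :=
    (Real.GammaIntegral_convergent hs0).mono_set (Set.Ioi_subset_Ioi zero_le_one)
  have step1 : (∫ x in Set.Ioi (1 : ℝ), Real.exp (-x)) ≤
      ∫ x in Set.Ioi (1 : ℝ), Real.exp (-x) * x ^ (s - 1) := by
    refine setIntegral_mono_on ?_ hint measurableSet_Ioi ?_
    · have := exp_neg_integrableOn_Ioi (1 : ℝ) (one_pos)
      refine this.congr_fun (fun x _ => by ring_nf) measurableSet_Ioi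
    · intro x hx
      have hx1 : (1 : ℝ) ≤ x := le_of_lt hx
      have : (1 : ℝ) ≤ x ^ (s - 1) := Real.one_le_rpow hx1 (by linarith)
      nlinarith [Real.exp_pos (-x)]
  have step2 : (∫ x in Set.Ioi (1 : ℝ), Real.exp (-x) * x ^ (s - 1)) ≤
      ∫ x in Set.Ioi (0 : ℝ), Real.exp (-x) * x ^ (s - 1) := by
    refine setIntegral_mono_set (Real.GammaIntegral_convergent hs0) ?_ ?_
    · filter_upwards [self_mem_ae_restrict measurableSet_Ioi] with x hx
      have hx0 : (0:ℝ) < x := hx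
      positivity
    · exact HasSubset.Subset.eventuallyLE (Set.Ioi_subset_Ioi zero_le_one)
  linarith

/-- For `a > 0`, `Γ(a) ≥ e⁻¹ / a`. -/
lemma gamma_ge {a : ℝ} (ha : 0 < a) : Real.exp (-1) / a ≤ Real.Gamma a := by
  have h := Real.Gamma_add_one (ne_of_gt ha)
  have h2 : Real.exp (-1) ≤ Real.Gamma (a + 1) := gamma_ge_exp_neg_one (by linarith)
  rw [h] at h2
  rw [div_le_iff₀ ha]
  linarith [mul_comm a (Real.Gamma a)]

theorem stmt4 :
    ∃ C > (0 : ℝ), ∀ t : ℝ, 0 < t → t ≤ Real.exp (-2) →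
      jzero t ≤ C / (t * Real.log t ^ 2) := by
  refine ⟨Real.exp 1, Real.exp_pos 1, fun t ht htle => ?_⟩
  have ht1 : t < 1 := lt_of_le_of_lt htle (by
    rw [Real.exp_lt_one_iff]; norm_num)
  set r : ℝ := -Real.log t with hr_def
  have hr : 0 < r := by
    have : Real.log t < 0 := Real.log_neg ht ht1
    simp [hr_def]; linarith
  have hlogsq : Real.log t ^ 2 = r ^ 2 := by
    rw [hr_def]; ring
  -- the dominating function
  have hgint : IntegrableOn (fun a : ℝ => Real.exp 1 / t * (a * Real.exp (-(r * a))))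
      (Set.Ioi 0) := by
    have base := integrableOn_rpow_mul_exp_neg_mul_rpow (s := 1) (p := 1) (b := r)
      (by norm_num) one_pos hr
    have h1 : IntegrableOn
        (fun x : ℝ => Real.exp 1 / t * (x ^ (1:ℝ) * Real.exp (-r * x ^ (1:ℝ))))
        (Set.Ioi 0) := base.const_mul _
    refine h1.congr_fun (fun x hx => ?_) measurableSet_Ioi
    simp only [Real.rpow_one]
    ring_nf
  -- pointwise bound
  have hpt : ∀ a ∈ Set.Ioi (0 : ℝ),
      t ^ (a - 1) / Real.Gamma a ≤ Real.exp 1 / t * (a * Real.exp (-(r * a))) := by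
    intro a ha
    have ha0 : 0 < a := ha
    have htp : (0 : ℝ) < t ^ (a - 1) := Real.rpow_pos_of_pos ht _
    have hΓ : Real.exp (-1) / a ≤ Real.Gamma a := gamma_ge ha0
    have hden : (0 : ℝ) < Real.exp (-1) / a := by positivity
    have h1 : t ^ (a - 1) / Real.Gamma a ≤ t ^ (a - 1) / (Real.exp (-1) / a) :=
      div_le_div_of_nonneg_left htp.le hden hΓ
    have heq : t ^ (a - 1) / (Real.exp (-1) / a) =
        Real.exp 1 / t * (a * Real.exp (-(r * a))) := by
      have hta : t ^ (a - 1) = Real.exp (-(r * a)) / t := by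
        rw [Real.rpow_def_of_pos ht, hr_def]
        rw [show Real.log t * (a - 1) = -(-Real.log t * a) + -Real.log t by ring,
          Real.exp_add, Real.exp_neg (Real.log t), Real.exp_log ht]
        ring
      rw [hta, Real.exp_neg 1]
      field_simp
    rw [heq] at h1
    exact h1
  -- integral of dominating function
  have hgval : (∫ a in Set.Ioi (0 : ℝ), Real.exp 1 / t * (a * Real.exp (-(r * a))))
      = Real.exp 1 / (t * r ^ 2) := by
    rw [MeasureTheory.integral_const_mul]
    have h2 : (∫ a in Set.Ioi (0 : ℝ), a * Real.exp (-(r * a)))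
        = (∫ a in Set.Ioi (0 : ℝ), a ^ ((2 : ℝ) - 1) * Real.exp (-(r * a))) := by
      refine setIntegral_congr_fun measurableSet_Ioi (fun x hx => ?_)
      have hx0 : 0 < x := hx
      norm_num
    rw [h2, Real.integral_rpow_mul_exp_neg_mul_Ioi (by norm_num : (0:ℝ) < 2) hr]
    have hΓ2 : Real.Gamma 2 = 1 := by
      rw [show (2:ℝ) = 1 + 1 by norm_num, Real.Gamma_add_one one_ne_zero,
        Real.Gamma_one, mul_one]
    rw [hΓ2]
    rw [show ((1:ℝ)/r) ^ (2:ℝ) = 1 / r ^ 2 by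
      rw [Real.rpow_two]; ring]
    field_simp
  -- conclude
  have hmono : jzero t ≤ ∫ a in Set.Ioi (0 : ℝ), Real.exp 1 / t * (a * Real.exp (-(r * a))) := by
    refine integral_mono_of_nonneg ?_ hgint ?_
    · filter_upwards [self_mem_ae_restrict measurableSet_Ioi] with a ha
      have ha0 : 0 < a := ha
      positivity
    · filter_upwards [self_mem_ae_restrict measurableSet_Ioi] with a ha
      exact hpt a ha
  rw [hgval] at hmono
  rw [hlogsq]
  exact hmono
end
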